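/- arXiv:1406.6440 — 2 statements merged into one kernel-verified Lean document; each statement's English description precedes it below -/
import Mathlib

section
/- Let C be a division of {1,...,n} with all elements in position k (i.e., |C| = (0^{k-1}, n, 0^{n-k})), and suppose s_1 s_2 ... s_i is a sequence admissible with respect to C (each term admissible after deleting the previous ones). Let j be the index such that s_i lies in the j-th set of the division obtained after deleting s_1,...,s_{i-1}. Then the sequence s_1, s_2, ..., s_i has exactly k - j descents. -/
open scoped Pointwise
open MeasureTheory Nat

namespace MixedEulerian

/-- A division of a finite set `S` into an ordered sequence of blocks,
with all elements of earlier blocks strictly smaller than those of later blocks. -/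
def IsDivision (C : List (Finset ℕ)) (S : Finset ℕ) : Prop :=
  (∀ s ∈ S, ∃ i, i < C.length ∧ s ∈ C.getD i ∅) ∧
  (∀ i, i < C.length → C.getD i ∅ ⊆ S) ∧
  (∀ i j, i < j → j < C.length →
    ∀ s ∈ C.getD i ∅, ∀ t ∈ C.getD j ∅, s < t)

/-- Type A admissibility: `s ∈ C_i` is admissible iff `s = min C₁`, `s = max C_n`,
or `i` is strictly between the first and the last index. (Indices are 0-based.) -/
def AdmissibleA (C : List (Finset ℕ)) (s : ℕ) : Prop :=
  ∃ i, i < C.length ∧ s ∈ C.getD i ∅ ∧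
    ((i = 0 ∧ ∀ t ∈ C.getD 0 ∅, s ≤ t) ∨
     (i = C.length - 1 ∧ ∀ t ∈ C.getD i ∅, t ≤ s) ∨
     (0 < i ∧ i + 1 < C.length))

/-- Type A deletion of `s` from the division `C`. -/
def deleteA (C : List (Finset ℕ)) (s : ℕ) : List (Finset ℕ) :=
  let i := C.findIdx (fun b => decide (s ∈ b))
  let B := C.getD i ∅
  let lo := B.filter (fun t => t < s)
  let hi := B.filter (fun t => s < t)
  if C.length ≤ 1 then []
  else if i = 0 then (hi ∪ C.getD 1 ∅) :: C.drop 2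
  else if i = C.length - 1 then C.take (i - 1) ++ [C.getD (i - 1) ∅ ∪ lo]
  else C.take (i - 1) ++ [C.getD (i - 1) ∅ ∪ lo, hi ∪ C.getD (i + 1) ∅] ++ C.drop (i + 2)

/-- `w` is a (type A) `C`-permutation: each entry is admissible in the division
obtained by deleting the previous entries, and all elements get deleted. -/
def IsCPermA : List (Finset ℕ) → List ℕ → Prop
  | C, [] => ∀ B ∈ C, B = ∅
  | C, s :: w => AdmissibleA C s ∧ IsCPermA (deleteA C s) w

/-- Type B admissibility: `s ∈ C_i` is admissible iff `s = min C₁` or `i ≠ 0`. -/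
def AdmissibleB (C : List (Finset ℕ)) (s : ℕ) : Prop :=
  ∃ i, i < C.length ∧ s ∈ C.getD i ∅ ∧
    ((i = 0 ∧ ∀ t ∈ C.getD 0 ∅, s ≤ t) ∨ i ≠ 0)

/-- Type B deletion of `s` from the division `C`. -/
def deleteB (C : List (Finset ℕ)) (s : ℕ) : List (Finset ℕ) :=
  let i := C.findIdx (fun b => decide (s ∈ b))
  if i = C.length - 1 ∧ 0 < i then
    C.take (i - 1) ++ [C.getD (i - 1) ∅ ∪ ((C.getD i ∅).erase s)]
  else deleteA C s

/-- `w` is a type B `C`-permutation. -/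
def IsCPermB : List (Finset ℕ) → List ℕ → Prop
  | C, [] => ∀ B ∈ C, B = ∅
  | C, s :: w => AdmissibleB C s ∧ IsCPermB (deleteB C s) w

/-- A sequence of elements that can be successively (type A) deleted from `C`. -/
def AdmissibleSeqA : List (Finset ℕ) → List ℕ → Prop
  | _, [] => True
  | C, s :: w => AdmissibleA C s ∧ AdmissibleSeqA (deleteA C s) w

/-- Number of descents of a list: the number of adjacent pairs that decrease. -/
def listDescents {α : Type*} [LinearOrder α] (l : List α) : ℕ :=
  (l.zip l.tail).countP (fun p => decide (p.2 < p.1))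

/-- Eulerian number `A(n,k)`: permutations of `{1,…,n}` with exactly `k-1` descents. -/
def eulerianA (n k : ℕ) : ℕ :=
  (List.range' 1 n).permutations.countP (fun l => decide (listDescents l = k - 1))

/-- `A(m,t;r)`: permutations of `{1,…,m+1}` with `t-1` descents and first entry `r+1`
(declared to be `0` when `t = 0`; it vanishes automatically when `t > m+1`). -/
def eulerianFirst (m t r : ℕ) : ℕ :=
  if t = 0 then 0 else
    (List.range' 1 (m + 1)).permutations.countP
      (fun l => decide (listDescents l = t - 1 ∧ l.headI = r + 1))

/-- The index of `t` in the `C`-permutation `w`: the (1-based) position of the block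
containing `t` just before `t` is deleted. -/
def indexFn (C : List (Finset ℕ)) : List ℕ → ℕ → ℕ
  | [], _ => 0
  | s :: w, t =>
      if t = s then C.findIdx (fun b => decide (t ∈ b)) + 1
      else indexFn (deleteA C s) w t

/-- An index function of `C`: any function sending each element of `C_i` into `{1,…,i}`
(1-based). -/
def IsIndexFn (C : List (Finset ℕ)) (I : ℕ → ℕ) : Prop :=
  ∀ i, i < C.length → ∀ s ∈ C.getD i ∅, 1 ≤ I s ∧ I s ≤ i + 1

/-- `C` is superdiagonal: `|C₁| + ⋯ + |C_i| ≥ i` for all `i`. -/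
def Superdiagonal (C : List (Finset ℕ)) : Prop :=
  ∀ i, i ≤ C.length → i ≤ ∑ j ∈ Finset.range i, (C.getD j ∅).card

/-- `C` is subdiagonal: `|C_n| + ⋯ + |C_{n-i+1}| ≥ i` for all `i`. -/
def Subdiagonal (C : List (Finset ℕ)) : Prop :=
  ∀ i, i ≤ C.length → i ≤ ∑ j ∈ Finset.range i, (C.getD (C.length - 1 - j) ∅).card

/-- The canonical division of `{1,…,c.sum}` with block sizes given by `c`. -/
def divisionOf (c : List ℕ) : List (Finset ℕ) :=
  (List.range c.length).map (fun i => Finset.Ioc ((c.take i).sum) ((c.take (i + 1)).sum))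

/-- The number of `C`-permutations for a division with block sizes `c`. -/
noncomputable def NPerm (c : List ℕ) : ℕ :=
  Nat.card {w : List ℕ // IsCPermA (divisionOf c) w}

/-- The division of `{1,…,n}` with all elements in (1-based) position `k`. -/
def midDivision (n k : ℕ) : List (Finset ℕ) :=
  List.replicate (k - 1) ∅ ++ [Finset.Icc 1 n] ++ List.replicate (n - k) ∅

/-- The hypersimplex `Δ_{k,n} ⊆ ℝ^{n+1}`. -/
def hypersimplex (n k : ℕ) : Set (Fin (n + 1) → ℝ) :=
  convexHull ℝ {x | ∃ T : Finset (Fin (n + 1)), T.card = k ∧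
    x = fun i => if i ∈ T then (1 : ℝ) else 0}

/-- The permutohedron `P(y₁,…,y_m) ⊆ ℝ^m`. -/
def permutohedron {m : ℕ} (y : Fin m → ℝ) : Set (Fin m → ℝ) :=
  convexHull ℝ {x | ∃ w : Equiv.Perm (Fin m), x = y ∘ w}

/-- The polytope `Γ_{k,n} ⊆ ℝ^n`, the convex hull of all `±e_{i₁} ± ⋯ ± e_{i_k}`. -/
def gammaPolytope (n k : ℕ) : Set (Fin n → ℝ) :=
  convexHull ℝ {x | ∃ T : Finset (Fin n), T.card = k ∧ ∃ ε : Fin n → ℝ,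
    (∀ i, ε i = 1 ∨ ε i = -1) ∧ x = fun i => if i ∈ T then ε i else 0}

/-- The signed permutohedron `SP(y₁,…,y_n) ⊆ ℝ^n`. -/
def signedPermutohedron {m : ℕ} (y : Fin m → ℝ) : Set (Fin m → ℝ) :=
  convexHull ℝ {x | ∃ w : Equiv.Perm (Fin m), ∃ ε : Fin m → ℝ,
    (∀ i, ε i = 1 ∨ ε i = -1) ∧ x = fun i => ε i * y (w i)}


/-! Starting from `midDivision n k`, at every stage all elements still present sit in two
adjacent blocks: those below the last deleted element `x` in block `K - 1`, those above it in
block `K`. Deleting some `s < x` from the lower block shifts this pair one place to the left and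
creates a descent; deleting some `s > x` from the upper block keeps it in place and creates none.
Hence the number of descents so far plus the index of the block containing the next deleted
element stays equal to its initial value `k - 1` (taking the sentinel `x = 0`, below every
element). -/

lemma listDescents_cons_cons (a b : ℕ) (l : List ℕ) :
    listDescents (a :: b :: l) = (if b < a then 1 else 0) + listDescents (b :: l) := by
  simp only [listDescents, List.tail_cons, List.zip_cons_cons, List.countP_cons,
    decide_eq_true_eq]
  omega

lemma listDescents_singleton (a : ℕ) : listDescents [a] = 0 := rfl

lemma listDescents_zero_cons (l : List ℕ) : listDescents (0 :: l) = listDescents l := by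
  cases l with
  | nil => rfl
  | cons a l => simp [listDescents_cons_cons]

lemma findIdx_mem_eq {l : List (Finset ℕ)} {s i : ℕ} (hi : i < l.length)
    (hs : s ∈ l.getD i ∅) (hprev : ∀ j < i, s ∉ l.getD j ∅) :
    l.findIdx (fun b => decide (s ∈ b)) = i := by
  rw [List.findIdx_eq hi, ← List.getD_eq_getElem l ∅ hi]
  refine ⟨decide_eq_true hs, fun j hj => ?_⟩
  rw [← List.getD_eq_getElem l ∅ (hj.trans hi)]
  exact decide_eq_false (hprev j hj)

lemma length_deleteA {C : List (Finset ℕ)} {s : ℕ}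
    (hs : C.findIdx (fun b => decide (s ∈ b)) < C.length) :
    (deleteA C s).length = C.length - 1 := by
  simp only [deleteA]
  split_ifs <;> simp <;> omega

lemma getD_deleteA {C : List (Finset ℕ)} {s i m : ℕ}
    (hfind : C.findIdx (fun b => decide (s ∈ b)) = i) (hi : i < C.length)
    (hm : m + 1 < C.length) :
    (deleteA C s).getD m ∅ =
      if m + 1 < i then C.getD m ∅
      else if m + 1 = i then C.getD m ∅ ∪ (C.getD i ∅).filter (· < s)
      else if m = i then (C.getD i ∅).filter (s < ·) ∪ C.getD (m + 1) ∅
      else C.getD (m + 1) ∅ := by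
  simp only [deleteA, hfind, if_neg (show ¬C.length ≤ 1 by omega)]
  split_ifs <;>
    simp only [List.getD_eq_getElem?_getD, List.getElem?_append, List.getElem?_take,
      List.getElem?_drop, List.getElem?_cons, List.length_append, List.length_take,
      List.length_cons, List.length_nil] <;>
    split_ifs <;> first | omega | grind

lemma getD_midDivision (n k m : ℕ) :
    (midDivision n k).getD m ∅ = if m = k - 1 then Finset.Icc 1 n else ∅ := by
  simp only [midDivision, List.getD_eq_getElem?_getD, List.getElem?_append,
    List.getElem?_replicate, List.length_replicate, List.length_append, List.length_cons,
    List.length_nil]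
  split_ifs <;> first | omega | simp_all

structure TwoBlocks (C : List (Finset ℕ)) (K x : ℕ) (A B : Finset ℕ) : Prop where
  getD_eq : ∀ m < C.length, C.getD m ∅ = if m + 1 = K then A else if m = K then B else ∅
  lt_of_mem_left : ∀ a ∈ A, a < x
  lt_of_mem_right : ∀ b ∈ B, x < b

lemma twoBlocks_midDivision (n k : ℕ) :
    TwoBlocks (midDivision n k) (k - 1) 0 ∅ (Finset.Icc 1 n) where
  getD_eq m _ := by
    rw [getD_midDivision]
    split_ifs <;> first | rfl | omega
  lt_of_mem_left a ha := absurd ha (Finset.notMem_empty a)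
  lt_of_mem_right b hb := (Finset.mem_Icc.mp hb).1

namespace TwoBlocks

variable {C : List (Finset ℕ)} {K x : ℕ} {A B : Finset ℕ} {s i : ℕ}

lemma index_of_mem (h : TwoBlocks C K x A B) (hi : i < C.length) (hs : s ∈ C.getD i ∅) :
    (s < x ∧ i + 1 = K) ∨ (x < s ∧ i = K) := by
  rw [h.getD_eq i hi] at hs
  split_ifs at hs with hA hB
  · exact Or.inl ⟨h.lt_of_mem_left s hs, hA⟩
  · exact Or.inr ⟨h.lt_of_mem_right s hs, hB⟩
  · exact absurd hs (Finset.notMem_empty s)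

lemma findIdx_eq (h : TwoBlocks C K x A B) (hi : i < C.length) (hs : s ∈ C.getD i ∅) :
    C.findIdx (fun b => decide (s ∈ b)) = i :=
  findIdx_mem_eq hi hs fun j hj hsj => by
    have := h.index_of_mem hi hs
    have := h.index_of_mem (hj.trans hi) hsj
    omega

lemma exists_deleteA (h : TwoBlocks C K x A B) (hi : i < C.length) (hs : s ∈ C.getD i ∅) :
    ∃ A' B', TwoBlocks (deleteA C s) i s A' B' := by
  have hfind := h.findIdx_eq hi hs
  have hlen := length_deleteA (hfind ▸ hi)
  have hx := h.lt_of_mem_left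
  have hy := h.lt_of_mem_right
  rcases h.index_of_mem hi hs with ⟨hsx, rfl⟩ | ⟨hsx, rfl⟩
  · refine ⟨A.filter (· < s), A.filter (s < ·) ∪ B, ⟨fun m hm => ?_, ?_, ?_⟩⟩
    · rw [getD_deleteA hfind hi (by omega), h.getD_eq i hi, h.getD_eq m (by omega),
        h.getD_eq (m + 1) (by omega)]
      split_ifs <;> first | omega | simp
    · simp
    · simp only [Finset.mem_union, Finset.mem_filter]
      rintro b (⟨-, hb⟩ | hb)
      exacts [hb, hsx.trans (hy b hb)]
  · refine ⟨A ∪ B.filter (· < s), B.filter (s < ·), ⟨fun m hm => ?_, ?_, ?_⟩⟩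
    · rw [getD_deleteA hfind hi (by omega), h.getD_eq i hi, h.getD_eq m (by omega),
        h.getD_eq (m + 1) (by omega)]
      split_ifs <;> first | omega | simp
    · simp only [Finset.mem_union, Finset.mem_filter]
      rintro a (ha | ⟨-, ha⟩)
      exacts [(hx a ha).trans hsx, ha]
    · simp

lemma descents_add_findIdx {w : List ℕ} (h : TwoBlocks C K x A B)
    (hw : AdmissibleSeqA C (w ++ [s])) :
    listDescents (x :: (w ++ [s])) + (w.foldl deleteA C).findIdx (fun b => decide (s ∈ b)) =
      K := by
  induction w generalizing C K x A B with
  | nil =>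
    obtain ⟨⟨i, hi, hs, -⟩, -⟩ := hw
    rw [List.nil_append, List.foldl_nil, h.findIdx_eq hi hs, listDescents_cons_cons,
      listDescents_singleton]
    rcases h.index_of_mem hi hs with ⟨hsx, rfl⟩ | ⟨hsx, rfl⟩
    · simp [hsx, add_comm]
    · simp [hsx.not_gt]
  | cons a w ih =>
    obtain ⟨⟨i, hi, ha, -⟩, hw⟩ := hw
    obtain ⟨A', B', h'⟩ := h.exists_deleteA hi ha
    have := ih h' hw
    rw [List.cons_append, List.foldl_cons, listDescents_cons_cons]
    rcases h.index_of_mem hi ha with ⟨hax, rfl⟩ | ⟨hax, rfl⟩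
    · simp only [hax, if_true]; omega
    · simp only [hax.not_gt, if_false]; omega

end TwoBlocks

theorem admissible_seq_descents_general (n k : ℕ)
    (p : List ℕ) (s : ℕ) (h : AdmissibleSeqA (midDivision n k) (p ++ [s])) :
    listDescents (p ++ [s]) =
      k - ((List.foldl deleteA (midDivision n k) p).findIdx
            (fun b => decide (s ∈ b)) + 1) := by
  have key := (twoBlocks_midDivision n k).descents_add_findIdx h
  rw [listDescents_zero_cons] at key
  omega

/-- for `|C| = (0^{k-1}, n, 0^{n-k})` and an admissible sequence
`s₁ … s_i`, if `s_i` lies in the `j`-th block just before its deletion, then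
`s₁, …, s_i` has exactly `k - j` descents. -/
theorem admissible_seq_descents (n k : ℕ) (h1 : 1 ≤ k) (h2 : k ≤ n)
    (p : List ℕ) (s : ℕ) (h : AdmissibleSeqA (midDivision n k) (p ++ [s])) :
    listDescents (p ++ [s]) =
      k - ((List.foldl deleteA (midDivision n k) p).findIdx
            (fun b => decide (s ∈ b)) + 1) :=
  admissible_seq_descents_general n k p s h

end MixedEulerian
end

section
/- Let c_1,...,c_n be nonnegative integers with c_1 + ... + c_n = n, and suppose there exists 0 ≤ r ≤ n such that c_1 + ... + c_i ≥ i for all 1 ≤ i ≤ r and c_n + c_{n-1} + ... + c_{n-i+1} ≥ i for all 1 ≤ i ≤ n-r. Then for any division C of {1,...,n} with |C| = (c_1,...,c_n), the number of C-permutations equals C(n, c_1+...+c_r) · 1^{c_1} 2^{c_2} ... r^{c_r} · 1^{c_n} 2^{c_{n-1}} ... (n-r)^{c_{r+1}}. -/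
/-!
Deleting an admissible element `s` of block `C_i` that has `a` smaller elements in its block
sends those `a` elements to block `i - 1` and the larger ones to block `i + 1`. The new block
sizes depend only on `(c, i, a)`, so the number of `C`-permutations obeys a recursion on block
sizes alone (`cpermCount`), in which `a` runs over all ranks, except that the first block may
only lose its minimum and the last block only its maximum.

The hybrid hypothesis survives every such deletion, with `r` lowered by one when `i < r`, and
the hybrid formula obeys the same recursion. The deletions from the first `r` blocks contribute
`C(n-1, r-1)` times a sum of weights that telescopes to `1^{c₁} ⋯ r^{c_r}`, because
`(i+1)^d = i^d + ∑_{a<d} i^a (i+1)^{d-1-a}`; the deletions from the last `n - r` blocks are the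
mirror image; Pascal's rule adds the two contributions.
-/

open scoped Pointwise
open MeasureTheory Nat

namespace MixedEulerian

open Finset

section Rank

variable {α : Type*} [LinearOrder α] {A : Finset α} {s : α}

lemma card_filter_lt_add_card_filter_gt (hs : s ∈ A) :
    (A.filter (· < s)).card + (A.filter (s < ·)).card + 1 = A.card := by
  have hsplit : A.filter (fun t => ¬ t < s) = insert s (A.filter (s < ·)) := by
    ext t
    simp only [mem_filter, mem_insert, not_lt]
    constructor
    · rintro ⟨ht, hst⟩
      rcases hst.lt_or_eq with hst | rfl
      · exact Or.inr ⟨ht, hst⟩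
      · exact Or.inl rfl
    · rintro (rfl | ⟨ht, hst⟩)
      · exact ⟨hs, le_rfl⟩
      · exact ⟨ht, hst.le⟩
  have h := card_filter_add_card_filter_not (s := A) (· < s)
  rw [hsplit, card_insert_of_notMem (by simp)] at h
  omega

lemma card_filter_lt_eq_zero_iff : (A.filter (· < s)).card = 0 ↔ ∀ t ∈ A, s ≤ t := by
  simp [Finset.card_eq_zero, filter_eq_empty_iff]

lemma card_filter_lt_eq_card_sub_one_iff (hs : s ∈ A) :
    (A.filter (· < s)).card = A.card - 1 ↔ ∀ t ∈ A, t ≤ s := by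
  have := card_filter_lt_add_card_filter_gt hs
  rw [show (A.filter (· < s)).card = A.card - 1 ↔ (A.filter (s < ·)).card = 0 by omega]
  simp [Finset.card_eq_zero, filter_eq_empty_iff]

lemma sum_card_filter_lt {M : Type*} [AddCommMonoid M] (A : Finset α) (f : ℕ → M) :
    ∑ s ∈ A, f (A.filter (· < s)).card = ∑ a ∈ range A.card, f a := by
  have hmono : StrictMonoOn (fun s => (A.filter (· < s)).card) A := fun x hx y _ hxy =>
    card_lt_card ((ssubset_iff_of_subset fun t ht =>
      mem_filter.mpr ⟨(mem_filter.mp ht).1, (mem_filter.mp ht).2.trans hxy⟩).mpr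
      ⟨x, mem_filter.mpr ⟨hx, hxy⟩, by simp⟩)
  have himage : A.image (fun s => (A.filter (· < s)).card) = range A.card := by
    refine eq_of_subset_of_card_le (fun a ha => ?_) ?_
    · obtain ⟨s, hs, rfl⟩ := mem_image.mp ha
      exact mem_range.mpr (card_lt_card ((ssubset_iff_of_subset (filter_subset _ _)).mpr
        ⟨s, hs, by simp⟩))
    · rw [card_range, Finset.card_image_of_injOn hmono.injOn]
  rw [← himage, sum_image hmono.injOn]

end Rank

lemma sum_pow_mul_add_one_pow_add_pow {R : Type*} [CommSemiring R] (x : R) (d : ℕ) :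
    ∑ a ∈ range d, x ^ a * (x + 1) ^ (d - 1 - a) + x ^ d = (x + 1) ^ d := by
  have h := geom_sum₂_mul_add (1 : R) x d
  rw [geom_sum₂_comm, mul_one, add_comm 1 x] at h
  exact h

lemma sum_filter_range_reflect {M : Type*} [AddCommMonoid M] (d : ℕ) (p : ℕ → Prop)
    [DecidablePred p] (g : ℕ → M) :
    ∑ a ∈ (range d).filter p, g a =
      ∑ a ∈ (range d).filter (fun a => p (d - 1 - a)), g (d - 1 - a) := by
  rw [sum_filter, sum_filter]
  exact (sum_range_reflect _ d).symm

lemma sum_range_reflect_add_sum_range (c : ℕ → ℕ) {m n : ℕ} (h : m ≤ n) :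
    ∑ j ∈ range m, c (n - 1 - j) + ∑ k ∈ range (n - m), c k = ∑ k ∈ range n, c k := by
  induction m with
  | zero => simp
  | succ m ih =>
    rw [← ih (by omega), sum_range_succ, show n - m = n - (m + 1) + 1 by omega, sum_range_succ,
      show n - 1 - m = n - (m + 1) by omega]
    ring

/-- Block sizes after deleting, from block `i` (0-based) of a division with block sizes `c`,
the element with `a` smaller elements in its block: these `a` elements join block `i - 1` and
the larger ones join block `i + 1`. -/
def sizesAfterDelete (c : ℕ → ℕ) (i a k : ℕ) : ℕ :=
  if k + 1 < i then c k
  else if k + 1 = i then c (i - 1) + a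
  else if k = i then c i - 1 - a + c (i + 1)
  else c (k + 1)

section SizesAfterDelete

variable (c : ℕ → ℕ) {i k : ℕ} (a : ℕ)

lemma sizesAfterDelete_of_lt (h : k + 1 < i) : sizesAfterDelete c i a k = c k :=
  if_pos h

lemma sizesAfterDelete_of_succ_eq (h : k + 1 = i) :
    sizesAfterDelete c i a k = c (i - 1) + a := by
  rw [sizesAfterDelete, if_neg (by omega), if_pos h]

lemma sizesAfterDelete_self : sizesAfterDelete c i a i = c i - 1 - a + c (i + 1) := by
  simp [sizesAfterDelete]

lemma sizesAfterDelete_of_gt (h : i < k) : sizesAfterDelete c i a k = c (k + 1) := by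
  rw [sizesAfterDelete, if_neg (by omega), if_neg (by omega), if_neg (by omega)]

end SizesAfterDelete

lemma sizesAfterDelete_congr {n : ℕ} {c c' : ℕ → ℕ} (h : ∀ k < n + 1, c k = c' k) (i a : ℕ)
    {k : ℕ} (hk : k < n) : sizesAfterDelete c i a k = sizesAfterDelete c' i a k := by
  unfold sizesAfterDelete
  split_ifs
  · exact h k (by omega)
  · rw [h (i - 1) (by omega)]
  · rw [h i (by omega), h (i + 1) (by omega)]
  · exact h (k + 1) (by omega)

lemma sum_range_sizesAfterDelete_of_le (c : ℕ → ℕ) {i a u : ℕ} (hi0 : i = 0 → a = 0)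
    (hu : u ≤ i) :
    ∑ j ∈ range u, sizesAfterDelete c i a j = ∑ j ∈ range u, c j + if u = i then a else 0 := by
  induction u with
  | zero => rcases Nat.eq_zero_or_pos i with rfl | hpos <;> simp [*, Nat.ne_of_lt]
  | succ u ih =>
    rw [sum_range_succ, sum_range_succ, ih (by omega), if_neg (by omega)]
    by_cases h : u + 1 = i
    · rw [sizesAfterDelete_of_succ_eq c a h, if_pos h, show i - 1 = u by omega]
      ring
    · rw [sizesAfterDelete_of_lt c a (by omega), if_neg h]
      ring

lemma sum_range_sizesAfterDelete_of_lt (c : ℕ → ℕ) {i a u : ℕ} (hi0 : i = 0 → a = 0)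
    (ha : a < c i) (hu : i < u) :
    ∑ j ∈ range u, sizesAfterDelete c i a j + 1 = ∑ j ∈ range (u + 1), c j := by
  induction u with
  | zero => omega
  | succ u ih =>
    rw [sum_range_succ, sum_range_succ _ (u + 1)]
    rcases (Nat.lt_succ_iff.mp hu).lt_or_eq with h | rfl
    · rw [sizesAfterDelete_of_gt c a h, ← ih h]
      ring
    · rw [sizesAfterDelete_self, sum_range_sizesAfterDelete_of_le c hi0 le_rfl, if_pos rfl,
        sum_range_succ]
      omega

lemma sizesAfterDelete_reverse (c : ℕ → ℕ) {n j a k : ℕ} (hj : j ≤ n) (ha : a < c (n - j))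
    (hk : k < n) :
    sizesAfterDelete c (n - j) (c (n - j) - 1 - a) (n - 1 - k) =
      sizesAfterDelete (fun k => c (n - k)) j a k := by
  obtain h | h | h | h : k + 1 < j ∨ k + 1 = j ∨ k = j ∨ j < k := by omega
  · rw [sizesAfterDelete_of_gt _ _ (by omega), sizesAfterDelete_of_lt _ _ h]
    congr 1
    omega
  · rw [show n - 1 - k = n - j by omega, sizesAfterDelete_self, sizesAfterDelete_of_succ_eq _ _ h,
      show n - j + 1 = n - (j - 1) by omega]
    omega
  · rw [sizesAfterDelete_of_succ_eq _ _ (by omega), h, sizesAfterDelete_self,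
      show n - j - 1 = n - (j + 1) by omega]
    omega
  · rw [sizesAfterDelete_of_lt _ _ (by omega), sizesAfterDelete_of_gt _ _ h]
    congr 1
    omega

def weight (m : ℕ) (d : ℕ → ℕ) : ℕ := ∏ k ∈ range m, (k + 1) ^ d k

lemma weight_congr {m : ℕ} {d d' : ℕ → ℕ} (h : ∀ k < m, d k = d' k) :
    weight m d = weight m d' :=
  prod_congr rfl fun k hk => by rw [h k (mem_range.mp hk)]

lemma weight_succ (m : ℕ) (d : ℕ → ℕ) : weight (m + 1) d = weight m d * (m + 1) ^ d m :=
  prod_range_succ _ _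

lemma weight_sizesAfterDelete {d : ℕ → ℕ} {m i a : ℕ} (hi : i ≤ m) (ha : a < d i)
    (hi0 : i = 0 → a = 0) (him : i = m → d i ≤ 1) :
    weight m (sizesAfterDelete d i a) =
      weight i d * (∏ k ∈ Ico i m, (k + 1) ^ d (k + 1)) * (i ^ a * (i + 1) ^ (d i - 1 - a)) := by
  have hlow : ∏ k ∈ range i, (k + 1) ^ sizesAfterDelete d i a k = weight i d * i ^ a := by
    rcases i with _ | j
    · simp [weight, hi0 rfl]
    · rw [prod_range_succ, sizesAfterDelete_of_succ_eq d a rfl, weight_succ, pow_add,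
        prod_congr rfl fun k hk => by rw [sizesAfterDelete_of_lt d a (by simp at hk; omega)]]
      simp only [weight, add_tsub_cancel_right]
      ring
  have hhigh : ∏ k ∈ Ico i m, (k + 1) ^ sizesAfterDelete d i a k =
      (∏ k ∈ Ico i m, (k + 1) ^ d (k + 1)) * (i + 1) ^ (d i - 1 - a) := by
    rcases hi.lt_or_eq with him' | rfl
    · rw [prod_eq_prod_Ico_succ_bot him', prod_eq_prod_Ico_succ_bot him', sizesAfterDelete_self,
        prod_congr rfl fun k hk => by rw [sizesAfterDelete_of_gt d a (by simp at hk; omega)],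
        pow_add]
      ring
    · simp [show d i - 1 - a = 0 by have := him rfl; omega]
  rw [weight, ← prod_range_mul_prod_Ico _ hi, hlow, hhigh]
  ring

lemma sum_weight_sizesAfterDelete {d : ℕ → ℕ} {m : ℕ} (h0 : 1 ≤ d 0) (hm : d m ≤ 1) :
    ∑ i ∈ range (m + 1), ∑ a ∈ (range (d i)).filter (fun a => i = 0 → a = 0),
      weight m (sizesAfterDelete d i a) = weight (m + 1) d := by
  set Q : ℕ → ℕ := fun j => ∏ k ∈ Ico j m, (k + 1) ^ d (k + 1) with hQ
  have hblock : ∀ i ≤ m, ∑ a ∈ (range (d i)).filter (fun a => i = 0 → a = 0),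
      weight m (sizesAfterDelete d i a) + weight i d * i ^ d i * Q i = weight (i + 1) d * Q i := by
    intro i hi
    have hinner : ∑ a ∈ (range (d i)).filter (fun a => i = 0 → a = 0),
        i ^ a * (i + 1) ^ (d i - 1 - a) + i ^ d i = (i + 1) ^ d i := by
      rcases Nat.eq_zero_or_pos i with rfl | hpos
      · rw [show (range (d 0)).filter (fun a => 0 = 0 → a = 0) = {0} by
          ext a; simp only [mem_filter, mem_range, mem_singleton, forall_const]; omega]
        simp [zero_pow (show d 0 ≠ 0 by omega)]
      · rw [filter_true_of_mem fun a _ h => absurd h hpos.ne']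
        exact sum_pow_mul_add_one_pow_add_pow i (d i)
    have hterm : ∀ a ∈ (range (d i)).filter (fun a => i = 0 → a = 0),
        weight m (sizesAfterDelete d i a) =
          weight i d * Q i * (i ^ a * (i + 1) ^ (d i - 1 - a)) := fun a ha => by
      rw [mem_filter, mem_range] at ha
      exact weight_sizesAfterDelete hi ha.1 ha.2 (fun h => h ▸ hm)
    rw [sum_congr rfl hterm, ← mul_sum, weight_succ, ← hinner]
    ring
  have hprefix : ∀ j ≤ m, ∑ i ∈ range j, ∑ a ∈ (range (d i)).filter (fun a => i = 0 → a = 0),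
      weight m (sizesAfterDelete d i a) = weight j d * j ^ d j * Q j := by
    intro j
    induction j with
    | zero => simp [zero_pow (show d 0 ≠ 0 by omega)]
    | succ j ih =>
      intro hj
      rw [sum_range_succ, ih (by omega), add_comm, hblock j (by omega), hQ]
      simp only [prod_eq_prod_Ico_succ_bot (show j < m by omega)]
      ring
  rw [sum_range_succ, hprefix m le_rfl, add_comm, hblock m le_rfl, hQ]
  simp

def hybridCount (n r : ℕ) (c : ℕ → ℕ) : ℕ :=
  n.choose r * weight r c * weight (n - r) (fun k => c (n - 1 - k))

lemma hybridCount_congr {n r : ℕ} {c c' : ℕ → ℕ} (hr : r ≤ n) (h : ∀ k < n, c k = c' k) :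
    hybridCount n r c = hybridCount n r c' := by
  unfold hybridCount
  rw [weight_congr fun k hk => h k (by omega), weight_congr fun k hk => h (n - 1 - k) (by omega)]

lemma hybridCount_reverse {n r : ℕ} (c : ℕ → ℕ) (hr : r ≤ n) :
    hybridCount n (n - r) (fun k => c (n - 1 - k)) = hybridCount n r c := by
  unfold hybridCount
  rw [Nat.choose_symm hr, Nat.sub_sub_self hr,
    weight_congr fun k hk => show c (n - 1 - (n - 1 - k)) = c k by congr 1; omega]
  ring

lemma sum_hybridCount_sizesAfterDelete_of_one_le_of_le_one {n m : ℕ} {c : ℕ → ℕ} (hm : m ≤ n)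
    (h0 : 1 ≤ c 0) (hlast : c m ≤ 1) :
    ∑ i ∈ range (m + 1), ∑ a ∈ (range (c i)).filter (fun a => i = 0 → a = 0),
      hybridCount n m (sizesAfterDelete c i a) =
        n.choose m * weight (m + 1) c * weight (n - m) (fun k => c (n - k)) := by
  have hterm : ∀ i ∈ range (m + 1), ∀ a ∈ (range (c i)).filter (fun a => i = 0 → a = 0),
      hybridCount n m (sizesAfterDelete c i a) =
        n.choose m * weight (n - m) (fun k => c (n - k)) * weight m (sizesAfterDelete c i a) := by
    intro i hi a ha
    rw [mem_range] at hi
    rw [mem_filter, mem_range] at ha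
    rw [hybridCount, mul_right_comm]
    congr 2
    refine weight_congr fun k hk => ?_
    rcases (show i ≤ n - 1 - k by omega).lt_or_eq with h | h
    · rw [sizesAfterDelete_of_gt _ _ h]
      congr 1
      omega
    · obtain rfl : i = m := by omega
      rw [← h, sizesAfterDelete_self, show c i = 1 by omega, show i + 1 = n - k by omega]
      omega
  rw [sum_congr rfl fun i hi => sum_congr rfl (hterm i hi)]
  simp only [← mul_sum]
  rw [sum_weight_sizesAfterDelete h0 hlast]
  ring

def AdmissibleRank (last : ℕ) (c : ℕ → ℕ) (i a : ℕ) : Prop :=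
  (i = 0 → a = 0) ∧ (i = last → a = c i - 1)

instance (last : ℕ) (c : ℕ → ℕ) (i : ℕ) : DecidablePred (AdmissibleRank last c i) :=
  fun _ => inferInstanceAs (Decidable (_ ∧ _))

/-- `(c₁,…,c_r)` is superdiagonal and `(c_{r+1},…,c_n)` subdiagonal, expressed through prefix
sums: they lie on or above the diagonal up to `r` and on or below it from `r` on. -/
structure IsHybrid (n r : ℕ) (c : ℕ → ℕ) : Prop where
  le : r ≤ n
  sum_eq : ∑ j ∈ range n, c j = n
  le_sum : ∀ u ≤ r, u ≤ ∑ j ∈ range u, c j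
  sum_le : ∀ u, r ≤ u → u ≤ n → ∑ j ∈ range u, c j ≤ u

namespace IsHybrid

variable {n r : ℕ} {c : ℕ → ℕ}

lemma sum_range_eq (h : IsHybrid n r c) : ∑ j ∈ range r, c j = r :=
  le_antisymm (h.sum_le r le_rfl h.le) (h.le_sum r le_rfl)

lemma one_le_first (h : IsHybrid n r c) (hr : 0 < r) : 1 ≤ c 0 := by
  simpa using h.le_sum 1 hr

lemma le_one_pred (h : IsHybrid n r c) (hr : 0 < r) : c (r - 1) ≤ 1 := by
  have := h.le_sum (r - 1) (by omega)
  have := sum_range_succ c (r - 1)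
  rw [Nat.sub_add_cancel hr, h.sum_range_eq] at this
  omega

lemma le_one (h : IsHybrid n r c) (hr : r < n) : c r ≤ 1 := by
  have := h.sum_le (r + 1) (by omega) hr
  rw [sum_range_succ, h.sum_range_eq] at this
  omega

lemma one_le_last (h : IsHybrid (n + 1) r c) (hr : r ≤ n) : 1 ≤ c n := by
  have := h.sum_le n hr (by omega)
  have := h.sum_eq
  rw [sum_range_succ] at this
  omega

lemma sizesAfterDelete (h : IsHybrid (n + 1) r c) {i a : ℕ} (hi : i ≤ n) (ha : a < c i)
    (hadm : AdmissibleRank n c i a) :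
    IsHybrid n (if i < r then r - 1 else r) (sizesAfterDelete c i a) := by
  obtain ⟨hi0, hin⟩ := hadm
  set r' := if i < r then r - 1 else r with hr'_def
  have hr' : (i < r → r' + 1 = r) ∧ (r ≤ i → r' = r) := by
    constructor <;> intro <;> simp only [hr'_def] <;> split_ifs <;> omega
  have hle := fun u (hu : u ≤ i) => sum_range_sizesAfterDelete_of_le c hi0 hu
  have hlt := fun u (hu : i < u) => sum_range_sizesAfterDelete_of_lt c hi0 ha hu
  have hself := hle i le_rfl
  rw [if_pos rfl] at hself
  have hsucc := sum_range_succ c i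
  have htotal := h.sum_eq
  have hsum := h.sum_range_eq
  have hrn := h.le
  refine ⟨by omega, ?_, fun u hu => ?_, fun u hu hun => ?_⟩
  · rcases hi.lt_or_eq with hi | rfl
    · have := hlt n hi
      omega
    · have := hin rfl
      omega
  · rcases le_or_gt u i with hui | hiu
    · have hs := hle u hui
      have := h.le_sum u (by omega)
      split_ifs at hs <;> omega
    · have := hlt u hiu
      have := h.le_sum (u + 1) (by omega)
      omega
  · obtain hiu | hui | rfl : i < u ∨ u < i ∨ u = i := by omega
    · have := hlt u hiu
      have := h.sum_le (u + 1) (by omega) (by omega)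
      omega
    · have hs := hle u hui.le
      have := h.sum_le u (by omega) (by omega)
      rw [if_neg hui.ne] at hs
      omega
    · have := h.sum_le (u + 1) (by omega) (by omega)
      omega

end IsHybrid

lemma sum_range_hybridCount_sizesAfterDelete {n m : ℕ} {c : ℕ → ℕ}
    (h : IsHybrid (n + 1) (m + 1) c) :
    ∑ i ∈ range (m + 1), ∑ a ∈ (range (c i)).filter (AdmissibleRank n c i),
      hybridCount n m (sizesAfterDelete c i a) =
        n.choose m * weight (m + 1) c * weight (n - m) (fun k => c (n - k)) := by
  have hm : m ≤ n := by have := h.le; omega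
  have hlast : c m ≤ 1 := h.le_one_pred m.succ_pos
  rw [← sum_hybridCount_sizesAfterDelete_of_one_le_of_le_one hm (h.one_le_first m.succ_pos) hlast]
  refine sum_congr rfl fun i hi => ?_
  congr 1
  refine filter_congr fun a ha => ⟨And.left, fun h0 => ⟨h0, fun hin => ?_⟩⟩
  obtain rfl : i = m := by rw [mem_range] at hi; omega
  rw [mem_range] at ha
  omega

lemma sum_Ico_hybridCount_sizesAfterDelete {n r : ℕ} {c : ℕ → ℕ} (h : IsHybrid (n + 1) r c)
    (hr : r ≤ n) :
    ∑ i ∈ Ico r (n + 1), ∑ a ∈ (range (c i)).filter (AdmissibleRank n c i),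
      hybridCount n r (sizesAfterDelete c i a) =
        n.choose r * weight r c * weight (n + 1 - r) (fun k => c (n - k)) := by
  have hleft := sum_hybridCount_sizesAfterDelete_of_one_le_of_le_one (n := n) (m := n - r)
    (c := fun k => c (n - k)) (by omega) (by simpa using h.one_le_last hr)
    (by simpa [Nat.sub_sub_self hr] using h.le_one (by omega))
  rw [show n - r + 1 = n + 1 - r by omega, Nat.choose_symm hr, Nat.sub_sub_self hr,
    weight_congr fun k hk => show c (n - (n - k)) = c k by congr 1; omega] at hleft
  -- Reversing the order of the blocks turns these deletions into deletions from the first blocks.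
  rw [mul_right_comm, ← hleft, range_eq_Ico,
    show Ico r (n + 1) = Ico (n + 1 - (n + 1 - r)) (n + 1 - 0) by congr 1; omega,
    ← sum_Ico_reflect _ _ (by omega)]
  refine sum_congr rfl fun j hj => ?_
  rw [mem_Ico] at hj
  rw [sum_filter_range_reflect]
  have hadm : ∀ a ∈ range (c (n - j)),
      AdmissibleRank n c (n - j) (c (n - j) - 1 - a) ↔ (j = 0 → a = 0) := by
    intro a ha
    rw [mem_range] at ha
    have hr0 : n - j = 0 → c (n - j) ≤ 1 := fun h0 => by
      rw [h0]; simpa [show r = 0 by omega] using h.le_one (by omega)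
    simp only [AdmissibleRank]
    omega
  rw [filter_congr hadm]
  refine sum_congr rfl fun a ha => ?_
  rw [mem_filter, mem_range] at ha
  rw [← hybridCount_reverse _ hr]
  exact hybridCount_congr (by omega) fun k hk => sizesAfterDelete_reverse c (by omega) ha.1 hk

theorem sum_hybridCount_sizesAfterDelete {n r : ℕ} {c : ℕ → ℕ} (h : IsHybrid (n + 1) r c) :
    ∑ i ∈ range (n + 1), ∑ a ∈ (range (c i)).filter (AdmissibleRank n c i),
      hybridCount n (if i < r then r - 1 else r) (sizesAfterDelete c i a) =
        hybridCount (n + 1) r c := by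
  have hlower : ∑ i ∈ range r, ∑ a ∈ (range (c i)).filter (AdmissibleRank n c i),
      hybridCount n (if i < r then r - 1 else r) (sizesAfterDelete c i a) =
        ∑ i ∈ range r, ∑ a ∈ (range (c i)).filter (AdmissibleRank n c i),
          hybridCount n (r - 1) (sizesAfterDelete c i a) :=
    sum_congr rfl fun i hi => by rw [if_pos (mem_range.mp hi)]
  have hupper : ∑ i ∈ Ico r (n + 1), ∑ a ∈ (range (c i)).filter (AdmissibleRank n c i),
      hybridCount n (if i < r then r - 1 else r) (sizesAfterDelete c i a) =
        ∑ i ∈ Ico r (n + 1), ∑ a ∈ (range (c i)).filter (AdmissibleRank n c i),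
          hybridCount n r (sizesAfterDelete c i a) :=
    sum_congr rfl fun i hi => by rw [if_neg (by rw [mem_Ico] at hi; omega)]
  have hcount : hybridCount (n + 1) r c =
      (n + 1).choose r * weight r c * weight (n + 1 - r) (fun k => c (n - k)) := by
    simp only [hybridCount, add_tsub_cancel_right]
  rw [← sum_range_add_sum_Ico _ h.le, hlower, hupper, hcount]
  obtain rfl | ⟨m, rfl⟩ : r = 0 ∨ ∃ m, r = m + 1 := by cases r <;> simp
  · rw [range_zero, sum_empty, zero_add, sum_Ico_hybridCount_sizesAfterDelete h (zero_le n)]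
    simp
  rw [Nat.add_sub_cancel, sum_range_hybridCount_sizesAfterDelete h, Nat.add_sub_add_right]
  rcases Nat.lt_or_ge m n with hmn | hmn
  · rw [sum_Ico_hybridCount_sizesAfterDelete h hmn, Nat.choose_succ_succ', Nat.add_sub_add_right]
    ring
  · obtain rfl : m = n := le_antisymm (Nat.le_of_succ_le_succ h.le) hmn
    simp

def cpermCount : ℕ → (ℕ → ℕ) → ℕ
  | 0, _ => 1
  | n + 1, c => ∑ i ∈ range (n + 1), ∑ a ∈ (range (c i)).filter (AdmissibleRank n c i),
      cpermCount n (sizesAfterDelete c i a)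

theorem cpermCount_eq_hybridCount : ∀ {n r : ℕ} {c : ℕ → ℕ},
    IsHybrid n r c → cpermCount n c = hybridCount n r c
  | 0, r, c, h => by
    obtain rfl : r = 0 := Nat.le_zero.mp h.le
    simp [cpermCount, hybridCount, weight]
  | n + 1, r, c, h => by
    rw [cpermCount, ← sum_hybridCount_sizesAfterDelete h]
    refine sum_congr rfl fun i hi => sum_congr rfl fun a ha => ?_
    rw [mem_range] at hi
    rw [mem_filter, mem_range] at ha
    exact cpermCount_eq_hybridCount (h.sizesAfterDelete (by omega) ha.1 ha.2)

lemma cpermCount_congr : ∀ {n : ℕ} {c c' : ℕ → ℕ}, (∀ k < n, c k = c' k) →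
    cpermCount n c = cpermCount n c'
  | 0, _, _, _ => rfl
  | n + 1, c, c', h => by
    refine sum_congr rfl fun i hi => ?_
    have hi' := mem_range.mp hi
    rw [h i hi', filter_congr fun a _ => show AdmissibleRank n c i a ↔ AdmissibleRank n c' i a by
      simp only [AdmissibleRank, h i hi']]
    exact sum_congr rfl fun a _ => cpermCount_congr fun k hk => sizesAfterDelete_congr h i a hk

lemma lt_length_of_mem_getD {α : Type*} {C : List (Finset α)} {k : ℕ} {x : α}
    (hx : x ∈ C.getD k ∅) : k < C.length := by
  by_contra h
  rw [List.getD_eq_default _ _ (not_lt.mp h)] at hx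
  simp at hx

namespace IsDivision

variable {C : List (Finset ℕ)} {S : Finset ℕ}

lemma eq_of_mem (h : IsDivision C S) {i j s : ℕ} (hi : i < C.length) (hj : j < C.length)
    (hsi : s ∈ C.getD i ∅) (hsj : s ∈ C.getD j ∅) : i = j := by
  by_contra hne
  rcases Nat.lt_or_gt_of_ne hne with h' | h'
  · exact lt_irrefl s (h.2.2 i j h' hj s hsi s hsj)
  · exact lt_irrefl s (h.2.2 j i h' hi s hsj s hsi)

lemma findIdx_eq (h : IsDivision C S) {i s : ℕ} (hi : i < C.length) (hs : s ∈ C.getD i ∅) :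
    C.findIdx (fun b => decide (s ∈ b)) = i := by
  rw [List.findIdx_eq hi]
  refine ⟨by simpa [← List.getD_eq_getElem C ∅ hi] using hs, fun j hj => ?_⟩
  simp only [decide_eq_false_iff_not]
  intro hmem
  rw [← List.getD_eq_getElem C ∅ (by omega)] at hmem
  exact absurd (h.eq_of_mem (by omega) hi hmem hs) hj.ne

lemma disjoint (hdiv : IsDivision C S) {k k' : ℕ}
    (hne : k ≠ k') : Disjoint (C.getD k ∅) (C.getD k' ∅) :=
  disjoint_left.mpr fun _ hx hx' =>
    hne (hdiv.eq_of_mem (lt_length_of_mem_getD hx) (lt_length_of_mem_getD hx') hx hx')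

lemma sum_eq_sum_getD {M : Type*} [AddCommMonoid M] (hdiv : IsDivision C S) (f : ℕ → M) :
    ∑ s ∈ S, f s = ∑ i ∈ range C.length, ∑ s ∈ C.getD i ∅, f s := by
  have hS : S = (range C.length).biUnion (fun i => C.getD i ∅) := by
    ext t
    simp only [mem_biUnion, mem_range]
    exact ⟨hdiv.1 t, fun ⟨i, hi, ht⟩ => hdiv.2.1 i hi ht⟩
  rw [hS, sum_biUnion fun i _ j _ hij => hdiv.disjoint hij]

lemma admissibleA_iff_of_mem (hdiv : IsDivision C S) {i s : ℕ} (hi : i < C.length)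
    (hs : s ∈ C.getD i ∅) :
    AdmissibleA C s ↔ (i = 0 ∧ ∀ t ∈ C.getD i ∅, s ≤ t) ∨
      (i = C.length - 1 ∧ ∀ t ∈ C.getD i ∅, t ≤ s) ∨ (0 < i ∧ i + 1 < C.length) := by
  constructor
  · rintro ⟨i', hi', hsi', h⟩
    obtain rfl := hdiv.eq_of_mem hi' hi hsi' hs
    rcases h with ⟨rfl, h⟩ | h | h
    · exact Or.inl ⟨rfl, h⟩
    · exact Or.inr (Or.inl h)
    · exact Or.inr (Or.inr h)
  · rintro (⟨rfl, h⟩ | h | h)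
    · exact ⟨0, hi, hs, Or.inl ⟨rfl, h⟩⟩
    · exact ⟨i, hi, hs, Or.inr (Or.inl h)⟩
    · exact ⟨i, hi, hs, Or.inr (Or.inr h)⟩

end IsDivision

def blocksAfterDelete (C : List (Finset ℕ)) (i s j : ℕ) : Finset ℕ :=
  if j + 1 < i then C.getD j ∅
  else if j + 1 = i then C.getD (i - 1) ∅ ∪ (C.getD i ∅).filter (fun t => t < s)
  else if j = i then (C.getD i ∅).filter (fun t => s < t) ∪ C.getD (i + 1) ∅
  else C.getD (j + 1) ∅

section Deletion

variable {C : List (Finset ℕ)} {S : Finset ℕ} {i s : ℕ}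

lemma mem_blocksAfterDelete {j x : ℕ} :
    x ∈ blocksAfterDelete C i s j ↔ ∃ k, x ∈ C.getD k ∅ ∧
      (k < i ∧ k = j ∨ k = i ∧ (x < s ∧ j + 1 = i ∨ s < x ∧ j = i) ∨ i < k ∧ k = j + 1) := by
  unfold blocksAfterDelete
  split_ifs with h1 h2 h3
  · refine ⟨fun hx => ⟨j, hx, by omega⟩, ?_⟩
    rintro ⟨k, hk, hkj⟩
    obtain rfl : k = j := by omega
    exact hk
  · simp only [mem_union, mem_filter]
    refine ⟨?_, ?_⟩
    · rintro (hx | ⟨hx, hxs⟩)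
      · exact ⟨i - 1, hx, by omega⟩
      · exact ⟨i, hx, by omega⟩
    · rintro ⟨k, hk, hkj⟩
      rcases hkj with hkj | ⟨rfl, hkj⟩ | hkj
      · exact Or.inl (by rwa [show i - 1 = k by omega])
      · exact Or.inr ⟨hk, by omega⟩
      · omega
  · simp only [mem_union, mem_filter]
    refine ⟨?_, ?_⟩
    · rintro (⟨hx, hxs⟩ | hx)
      · exact ⟨i, hx, by omega⟩
      · exact ⟨i + 1, hx, by omega⟩
    · rintro ⟨k, hk, hkj⟩
      rcases hkj with hkj | ⟨rfl, hkj⟩ | hkj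
      · omega
      · exact Or.inl ⟨hk, by omega⟩
      · exact Or.inr (by rwa [show i + 1 = k by omega])
  · refine ⟨fun hx => ⟨j + 1, hx, by omega⟩, ?_⟩
    rintro ⟨k, hk, hkj⟩
    obtain rfl : k = j + 1 := by omega
    exact hk

lemma getD_deleteA_s14 (hdiv : IsDivision C S) (hi : i < C.length) (hs : s ∈ C.getD i ∅) :
    (deleteA C s).length = C.length - 1 ∧
    ∀ j < C.length - 1, (deleteA C s).getD j ∅ = blocksAfterDelete C i s j := by
  rcases Nat.lt_or_ge C.length 2 with hlen | hlen
  · rw [deleteA, if_pos (by omega)]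
    exact ⟨by simp; omega, fun j hj => by omega⟩
  simp only [deleteA, hdiv.findIdx_eq hi hs, if_neg (show ¬ C.length ≤ 1 by omega)]
  have htake : (C.take (i - 1)).length = i - 1 := List.length_take_of_le (by omega)
  split_ifs with h0 hl <;> refine ⟨by simp; omega, fun j hj => ?_⟩ <;>
    simp only [blocksAfterDelete, List.getD_eq_getElem?_getD, List.getElem?_append, htake,
      List.getElem?_take, List.getElem?_drop, List.getElem?_cons, List.length_append,
      List.length_cons, List.length_nil] <;>
    split_ifs <;> first | omega | rfl | (congr 2; omega) | (subst_vars; rfl)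

lemma card_blocksAfterDelete (hdiv : IsDivision C S) (hs : s ∈ C.getD i ∅) (j : ℕ) :
    (blocksAfterDelete C i s j).card =
      sizesAfterDelete (fun k => (C.getD k ∅).card) i ((C.getD i ∅).filter (· < s)).card j := by
  have hcard := card_filter_lt_add_card_filter_gt hs
  unfold blocksAfterDelete sizesAfterDelete
  dsimp only
  split_ifs with h1 h2 h3
  · rfl
  · rw [card_union_of_disjoint ((hdiv.disjoint (by omega)).mono_right (filter_subset _ _))]
  · rw [card_union_of_disjoint ((hdiv.disjoint (by omega)).mono_left (filter_subset _ _))]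
    omega
  · rfl

lemma exists_mem_blocksAfterDelete (hi : i < C.length) (hmin : i = 0 → ∀ t ∈ C.getD i ∅, s ≤ t)
    (hmax : i = C.length - 1 → ∀ t ∈ C.getD i ∅, t ≤ s) {k t : ℕ} (hk : k < C.length)
    (htk : t ∈ C.getD k ∅) (hts : t ≠ s) :
    ∃ j < C.length - 1, t ∈ blocksAfterDelete C i s j := by
  simp only [mem_blocksAfterDelete]
  rcases lt_trichotomy k i with h | rfl | h
  · exact ⟨k, by omega, k, htk, Or.inl ⟨h, rfl⟩⟩
  · rcases Nat.lt_or_gt_of_ne hts with h | h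
    · have : k ≠ 0 := fun h0 => absurd (hmin h0 t htk) (not_le.mpr h)
      exact ⟨k - 1, by omega, k, htk, Or.inr (Or.inl ⟨rfl, Or.inl ⟨h, by omega⟩⟩)⟩
    · have : k ≠ C.length - 1 := fun hl => absurd (hmax hl t htk) (not_le.mpr h)
      exact ⟨k, by omega, k, htk, Or.inr (Or.inl ⟨rfl, Or.inr ⟨h, rfl⟩⟩)⟩
  · exact ⟨k - 1, by omega, k, htk, Or.inr (Or.inr ⟨h, by omega⟩)⟩

lemma isDivision_deleteA (hdiv : IsDivision C S) (hS : S.card = C.length) (hi : i < C.length)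
    (hs : s ∈ C.getD i ∅) (hadm : AdmissibleA C s) : IsDivision (deleteA C s) (S.erase s) := by
  have hsS : s ∈ S := hdiv.2.1 i hi hs
  rcases Nat.lt_or_ge C.length 2 with hlen | hlen
  · have hempty : S.erase s = ∅ := by
      rw [← Finset.card_eq_zero, card_erase_of_mem hsS]
      omega
    rw [hempty, deleteA, if_pos (by omega)]
    exact ⟨by simp, by simp, by simp⟩
  obtain ⟨hmin, hmax⟩ : (i = 0 → ∀ t ∈ C.getD i ∅, s ≤ t) ∧
      (i = C.length - 1 → ∀ t ∈ C.getD i ∅, t ≤ s) := by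
    rcases (hdiv.admissibleA_iff_of_mem hi hs).mp hadm with ⟨h0, h⟩ | ⟨hl, h⟩ | h
    · exact ⟨fun _ => h, fun hl => absurd hl (by omega)⟩
    · exact ⟨fun h0 => absurd h0 (by omega), fun _ => h⟩
    · exact ⟨fun h0 => absurd h0 (by omega), fun hl => absurd hl (by omega)⟩
  obtain ⟨hlen', hget⟩ := getD_deleteA_s14 hdiv hi hs
  refine ⟨fun t ht => ?_, fun j hj x hx => ?_, fun u v huv hv x hx y hy => ?_⟩
  · obtain ⟨hts, htS⟩ := mem_erase.mp ht
    obtain ⟨k, hk, htk⟩ := hdiv.1 t htS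
    obtain ⟨j, hj, htj⟩ := exists_mem_blocksAfterDelete hi hmin hmax hk htk hts
    exact ⟨j, by omega, by rwa [hget j hj]⟩
  · rw [hget j (by omega), mem_blocksAfterDelete] at hx
    obtain ⟨k, hxk, hk⟩ := hx
    refine mem_erase.mpr ⟨fun hxs => ?_, hdiv.2.1 k (lt_length_of_mem_getD hxk) hxk⟩
    subst hxs
    obtain rfl := hdiv.eq_of_mem (lt_length_of_mem_getD hxk) hi hxk hs
    omega
  · rw [hget u (by omega), mem_blocksAfterDelete] at hx
    rw [hget v (by omega), mem_blocksAfterDelete] at hy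
    obtain ⟨k, hxk, hk⟩ := hx
    obtain ⟨k', hyk', hk'⟩ := hy
    have hord : k < k' → x < y := fun h =>
      hdiv.2.2 k k' h (lt_length_of_mem_getD hyk') x hxk y hyk'
    omega

lemma admissibleA_iff (hdiv : IsDivision C S) (hS : S.card = C.length) (hi : i < C.length)
    (hs : s ∈ C.getD i ∅) :
    AdmissibleA C s ↔ AdmissibleRank (C.length - 1) (fun k => (C.getD k ∅).card) i
      ((C.getD i ∅).filter (· < s)).card := by
  have hsingle : C.length < 2 → (∀ t ∈ C.getD i ∅, s ≤ t) ∧ (∀ t ∈ C.getD i ∅, t ≤ s) := by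
    intro hlen
    have heq : ∀ t ∈ C.getD i ∅, t = s := fun t ht =>
      card_le_one.mp (by omega) t (hdiv.2.1 i hi ht) s (hdiv.2.1 i hi hs)
    exact ⟨fun t ht => (heq t ht).ge, fun t ht => (heq t ht).le⟩
  rw [hdiv.admissibleA_iff_of_mem hi hs, AdmissibleRank, card_filter_lt_eq_zero_iff,
    card_filter_lt_eq_card_sub_one_iff hs]
  generalize (∀ t ∈ C.getD i ∅, s ≤ t) = P at hsingle ⊢
  generalize (∀ t ∈ C.getD i ∅, t ≤ s) = Q at hsingle ⊢
  by_cases hP : P <;> by_cases hQ : Q <;> simp [hP, hQ] at hsingle ⊢ <;> omega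

end Deletion

lemma isCPermA_nil_iff {w : List ℕ} : IsCPermA [] w ↔ w = [] := by
  rcases w with _ | ⟨s, w⟩
  · simp [IsCPermA]
  · simp [IsCPermA, AdmissibleA]

open Classical in
lemma finite_and_card_cpermA_eq_sum {C : List (Finset ℕ)} {S : Finset ℕ} (hdiv : IsDivision C S)
    (hne : S.Nonempty) (hfin : ∀ s, AdmissibleA C s → Finite {w // IsCPermA (deleteA C s) w}) :
    Finite {w // IsCPermA C w} ∧ Nat.card {w // IsCPermA C w} =
      ∑ s ∈ S.filter (AdmissibleA C), Nat.card {w // IsCPermA (deleteA C s) w} := by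
  have hadmS : ∀ s, AdmissibleA C s → s ∈ S := fun s ⟨i, hi, hs, _⟩ => hdiv.2.1 i hi hs
  have hnonempty : ¬ ∀ B ∈ C, B = ∅ := fun hall => by
    obtain ⟨t, ht⟩ := hne
    obtain ⟨i, hi, hti⟩ := hdiv.1 t ht
    have hmem : C.getD i ∅ ∈ C := by
      rw [List.getD_eq_getElem C ∅ hi]
      exact List.getElem_mem hi
    rw [hall _ hmem] at hti
    simp at hti
  let g : (Σ s : S.filter (AdmissibleA C), {w // IsCPermA (deleteA C s) w}) →
      {w // IsCPermA C w} := fun p => ⟨p.1.1 :: p.2.1, (mem_filter.mp p.1.2).2, p.2.2⟩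
  have hg : Function.Bijective g := by
    refine ⟨fun ⟨⟨s, hs⟩, ⟨w, hw⟩⟩ ⟨⟨s', hs'⟩, ⟨w', hw'⟩⟩ h => ?_, fun ⟨w, hw⟩ => ?_⟩
    · obtain ⟨rfl, rfl⟩ := List.cons.inj (congrArg Subtype.val h)
      rfl
    · rcases w with _ | ⟨s, w⟩
      · exact absurd hw hnonempty
      · exact ⟨⟨⟨s, mem_filter.mpr ⟨hadmS s hw.1, hw.1⟩⟩, ⟨w, hw.2⟩⟩, rfl⟩
  have : ∀ s : S.filter (AdmissibleA C), Finite {w // IsCPermA (deleteA C s) w} :=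
    fun s => hfin s (mem_filter.mp s.2).2
  refine ⟨Finite.of_equiv _ (Equiv.ofBijective g hg), ?_⟩
  rw [← Nat.card_eq_of_bijective g hg, Nat.card_sigma]
  exact sum_coe_sort (S.filter (AdmissibleA C)) (fun s => Nat.card {w // IsCPermA (deleteA C s) w})

theorem finite_and_card_cpermA_eq_cpermCount : ∀ {n : ℕ} {C : List (Finset ℕ)} {S : Finset ℕ},
    IsDivision C S → C.length = n → S.card = n →
    Finite {w // IsCPermA C w} ∧
      Nat.card {w // IsCPermA C w} = cpermCount n (fun j => (C.getD j ∅).card)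
  | 0, C, S, _, hlen, _ => by
    obtain rfl := List.length_eq_zero_iff.mp hlen
    have : Unique {w // IsCPermA [] w} :=
      ⟨⟨⟨[], by simp [IsCPermA]⟩⟩, fun ⟨_, hw⟩ => Subtype.ext (isCPermA_nil_iff.mp hw)⟩
    exact ⟨inferInstance, Nat.card_unique⟩
  | n + 1, C, S, hdiv, hlen, hS => by
    classical
    set c : ℕ → ℕ := fun j => (C.getD j ∅).card
    have hfib : ∀ i < n + 1, ∀ s ∈ C.getD i ∅, AdmissibleA C s →
        Finite {w // IsCPermA (deleteA C s) w} ∧ Nat.card {w // IsCPermA (deleteA C s) w} =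
          cpermCount n (sizesAfterDelete c i ((C.getD i ∅).filter (· < s)).card) := by
      intro i hi s hs hadm
      obtain ⟨hlen', hget⟩ := getD_deleteA_s14 hdiv (by omega) hs
      obtain ⟨hfin, hcard⟩ := finite_and_card_cpermA_eq_cpermCount (n := n)
        (isDivision_deleteA hdiv (hS.trans hlen.symm) (by omega) hs hadm) (by omega)
        (by rw [card_erase_of_mem (hdiv.2.1 i (by omega) hs), hS]; rfl)
      refine ⟨hfin, hcard.trans (cpermCount_congr fun k hk => ?_)⟩
      rw [hget k (by omega), card_blocksAfterDelete hdiv hs]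
    obtain ⟨hfin, hcard⟩ := finite_and_card_cpermA_eq_sum hdiv (card_pos.mp (by omega))
      fun s ⟨i, hi, hs, h⟩ => (hfib i (by omega) s hs ⟨i, hi, hs, h⟩).1
    refine ⟨hfin, hcard.trans ?_⟩
    rw [sum_filter, hdiv.sum_eq_sum_getD, hlen, cpermCount]
    refine sum_congr rfl fun i hi => ?_
    have hi := mem_range.mp hi
    rw [sum_filter, ← sum_card_filter_lt]
    refine sum_congr rfl fun s hs => ?_
    have hiff : AdmissibleA C s ↔ AdmissibleRank n c i ((C.getD i ∅).filter (· < s)).card := by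
      rw [admissibleA_iff hdiv (hS.trans hlen.symm) (by omega) hs, hlen]
      rfl
    by_cases hadm : AdmissibleA C s
    · rw [if_pos hadm, if_pos (hiff.mp hadm)]
      exact (hfib i hi s hs hadm).2
    · rw [if_neg hadm, if_neg (mt hiff.mpr hadm)]

/-- hybrid formula: if `(c₁,…,c_r)` is superdiagonal and
`(c_{r+1},…,c_n)` is subdiagonal, the number of `C`-permutations is
`C(n, c₁+⋯+c_r) · 1^{c₁}⋯r^{c_r} · 1^{c_n}⋯(n-r)^{c_{r+1}}`. -/
theorem cperm_hybrid (n r : ℕ) (c : ℕ → ℕ) (hr : r ≤ n)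
    (hsum : ∑ i ∈ Finset.range n, c i = n)
    (hsuper : ∀ i, 1 ≤ i → i ≤ r → i ≤ ∑ j ∈ Finset.range i, c j)
    (hsub : ∀ i, 1 ≤ i → i ≤ n - r → i ≤ ∑ j ∈ Finset.range i, c (n - 1 - j))
    (C : List (Finset ℕ)) (hlen : C.length = n)
    (hC : IsDivision C (Finset.Icc 1 n))
    (hcard : ∀ i, i < n → (C.getD i ∅).card = c i) :
    Nat.card {w : List ℕ // IsCPermA C w} =
      Nat.choose n (∑ j ∈ Finset.range r, c j) *
        (∏ i ∈ Finset.range r, (i + 1) ^ c i) *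
        (∏ i ∈ Finset.range (n - r), (i + 1) ^ c (n - 1 - i)) := by
  have hhybrid : IsHybrid n r c := by
    refine ⟨hr, hsum, fun u hu => ?_, fun u hru hun => ?_⟩
    · rcases Nat.eq_zero_or_pos u with rfl | hu0
      · simp
      · exact hsuper u hu0 hu
    · have := sum_range_reflect_add_sum_range c (show n - u ≤ n by omega)
      rw [Nat.sub_sub_self hun] at this
      rcases Nat.eq_zero_or_pos (n - u) with h | h
      · omega
      · have := hsub (n - u) h (by omega)
        omega
  rw [(finite_and_card_cpermA_eq_cpermCount hC hlen (by simp)).2, cpermCount_congr hcard,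
    cpermCount_eq_hybridCount hhybrid, hhybrid.sum_range_eq]
  rfl

end MixedEulerian
end
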